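/- Let k and r be positive integers with r < k and let p = (p_1,…,p_k) be a tuple of non-negative integers with S_{p,r} non-empty. Let (S,f) be uniformly distributed on Ω. Then the probability that G_β(S,f) is a tree equals Pdet(M_β), where M_β = (M_{β,i,j})_{i,j∈[k]} is the matrix of events with M_{β,i,j} = J^{f(i)}_{i,j+1} for i∈[k−1] (the index j+1 taken cyclically modulo k), and M_{β,k,j} = Ω for all j∈[k]. -/

import Mathlib

open Finset

/-- The cyclic interval `]i,j]` of `[k] = {1,…,k}`, realized inside `ZMod k`
(the element `k` of `[k]` is represented by `0 : ZMod k`). -/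
def cyc (k : ℕ) [NeZero k] (i j : ZMod k) : Finset (ZMod k) :=
  Finset.univ.filter fun x => 1 ≤ (x - i).val ∧ (x - i).val ≤ (j - i).val

/-- Membership in `𝒮_{p,r}` : each `j ∈ [k]` belongs to exactly `p j` of the sets `S_1,…,S_r`. -/
def SprMem (k r : ℕ) [NeZero k] (p : ZMod k → ℕ) (S : Fin r → Finset (ZMod k)) : Prop :=
  ∀ j : ZMod k, Nat.card {i : Fin r // j ∈ S i} = p j

/-- Membership in `ℳ_{p,r}` : member of `𝒮_{p,r}` all of whose sets are proper subsets of `[k]`. -/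
def MprMem (k r : ℕ) [NeZero k] (p : ZMod k → ℕ) (S : Fin r → Finset (ZMod k)) : Prop :=
  SprMem k r p S ∧ ∀ i, S i ≠ Finset.univ

/-- `|ℳ_{p,r}|`. -/
noncomputable def Mcard (k r : ℕ) [NeZero k] (p : ZMod k → ℕ) : ℕ :=
  Nat.card {S : Fin r → Finset (ZMod k) // MprMem k r p S}

/-- `|𝒮_{p,r}|`. -/
noncomputable def Scard (k r : ℕ) [NeZero k] (p : ZMod k → ℕ) : ℕ :=
  Nat.card {S : Fin r → Finset (ZMod k) // SprMem k r p S}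

/-- `|ℳ_{q,r}|` for an integer-valued tuple `q` (empty if some entry of `q` is negative). -/
noncomputable def McardZ (k r : ℕ) [NeZero k] (q : ZMod k → ℤ) : ℕ :=
  Nat.card {S : Fin r → Finset (ZMod k) //
    (∀ j : ZMod k, (Nat.card {i : Fin r // j ∈ S i} : ℤ) = q j) ∧ ∀ i, S i ≠ Finset.univ}

/-- `alphaRel k S i j` holds iff `j = α(i,S)`. -/
def alphaRel (k : ℕ) [NeZero k] (S : Finset (ZMod k)) (i j : ZMod k) : Prop :=
  if S = Finset.univ then j = i else j ∉ S ∧ cyc k i (j - 1) ⊆ S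

/-- `betaRel k S i j` holds iff `j = β(i,S)`. -/
def betaRel (k : ℕ) [NeZero k] (S : Finset (ZMod k)) (i j : ZMod k) : Prop :=
  if S = Finset.univ then j = i else j + 1 ∉ S ∧ cyc k i j ⊆ S

/-- `gammaRel k S i j` holds iff `j = γ(i,S)`. -/
def gammaRel (k : ℕ) [NeZero k] (S : Finset (ZMod k)) (i j : ZMod k) : Prop :=
  if S = Finset.univ then j = i
  else if i ∈ S then j = i - 1
  else j + 1 ∉ S ∧ cyc k i j ⊆ S

/-- The digraph on `[k]` with the `k-1` arcs `(i, ζ(i, S_{f i}))` for `i ∈ [k-1]`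
(the nonzero elements of `ZMod k`) is a tree, i.e. a spanning tree oriented toward
the root `k` (represented by `0`): following the arcs from any vertex reaches the root. -/
def GIsTree (k r : ℕ) [NeZero k] (zeta : Finset (ZMod k) → ZMod k → ZMod k → Prop)
    (S : Fin r → Finset (ZMod k)) (f : {i : ZMod k // i ≠ 0} → Fin r) : Prop :=
  ∃ g : ZMod k → ZMod k, g 0 = 0 ∧
    (∀ i : {i : ZMod k // i ≠ 0}, zeta (S (f i)) i.1 (g i.1)) ∧
    ∀ x : ZMod k, ∃ n : ℕ, g^[n] x = 0

/-- Sample space: pairs of a tuple `S ∈ ℳ_{p,r}` and a surjection `f : [k-1] → [r]`,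
with the uniform probability measure. -/
abbrev OmM (k r : ℕ) [NeZero k] (p : ZMod k → ℕ) : Type :=
  {om : (Fin r → Finset (ZMod k)) × ({i : ZMod k // i ≠ 0} → Fin r) //
    MprMem k r p om.1 ∧ Function.Surjective om.2}

/-- Sample space `Ω`: pairs of a tuple `S ∈ 𝒮_{p,r}` and a surjection `f : [k-1] → [r]`,
with the uniform probability measure. -/
abbrev OmS (k r : ℕ) [NeZero k] (p : ZMod k → ℕ) : Type :=
  {om : (Fin r → Finset (ZMod k)) × ({i : ZMod k // i ≠ 0} → Fin r) //
    SprMem k r p om.1 ∧ Function.Surjective om.2}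

/-- Uniform probability of an event `A` in a (finite) sample space `Om`. -/
noncomputable def PrU {Om : Type} (A : Set Om) : ℚ :=
  (Nat.card A : ℚ) / (Nat.card Om : ℚ)

/-- The `Pr`-determinant of a `k × k` matrix of events (rows and columns indexed by
`[k]`, i.e. by `ZMod k`). -/
noncomputable def Pdet {k : ℕ} [NeZero k] {Om : Type} (E : ZMod k → ZMod k → Set Om) : ℚ :=
  ∑ pi : Equiv.Perm (ZMod k), ((Equiv.Perm.sign pi : ℤ) : ℚ) * PrU (⋂ i : ZMod k, E i (pi i))

/-- The matrix of events `M_α`: `M_{α,i,j} = I^{f(i)}_{i,j}` for `i ∈ [k-1]`, and the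
row of `i = k` (i.e. `0`) is constant equal to `Ω`. -/
def Malpha (k r : ℕ) [NeZero k] (p : ZMod k → ℕ) (i j : ZMod k) : Set (OmS k r p) :=
  {om : OmS k r p | ∀ hi : i ≠ 0, cyc k i j ⊆ om.1.1 (om.1.2 ⟨i, hi⟩)}

/-- The matrix of events `M_β`: `M_{β,i,j} = J^{f(i)}_{i,j+1}` for `i ∈ [k-1]`, and the
row of `i = k` (i.e. `0`) is constant equal to `Ω`. -/
def Mbeta (k r : ℕ) [NeZero k] (p : ZMod k → ℕ) (i j : ZMod k) : Set (OmS k r p) :=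
  {om : OmS k r p | ∀ hi : i ≠ 0,
    if i = j + 1 then om.1.1 (om.1.2 ⟨i, hi⟩) = Finset.univ
    else cyc k i (j + 1) ⊆ om.1.1 (om.1.2 ⟨i, hi⟩)}

/-- Membership of `om` in the event `J^{f(i)}_{a,b}`. -/
def Jmem (k r : ℕ) [NeZero k] (p : ZMod k → ℕ) (om : OmS k r p)
    (i : {i : ZMod k // i ≠ 0}) (a b : ZMod k) : Prop :=
  if a = b then om.1.1 (om.1.2 i) = Finset.univ else cyc k a b ⊆ om.1.1 (om.1.2 i)

/-!
Both sides are averages over `Ω`: `Pdet(M_β)` is the mean of the determinants of the `0/1`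
matrices `(1[(S,f) ∈ M_{β,i,j}])`, so it suffices to show that each such determinant is
`1` or `0` according as `G_β(S,f)` is a tree.

If `S_{f(i)} = [k]` then row `i` is all ones, like row `k`, and `β(i) = i` is a loop. Otherwise
row `i` is the indicator of the cyclic interval `[i, β(i) - 1]`. Ordering `[k]` as
`k < 1 < ⋯ < k - 1`, this is row `i` minus row `β(i)` of the unitriangular matrix
`W = (1[a ≤ b])`, plus a multiple of its all-ones row `k`. So the matrix is `B * W`, where
`B` has rows `e_k` and `e_i - e_{β(i)}` (outside column `k`). The determinant of `B` is `1`
when `β` leads every vertex to `k` (order the vertices by distance to `k`), and `0` otherwise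
(the indicator of the vertices that never reach `k` is in its kernel).
-/

section CyclicInterval

variable {k : ℕ} [NeZero k]

theorem ZMod.val_add_one_eq_ite (x : ZMod k) :
    (x + 1).val = if x.val + 1 = k then 0 else x.val + 1 := by
  have := ZMod.val_lt x
  rw [ZMod.val_add, ZMod.val_one_eq_one_mod, Nat.add_mod_mod]
  split_ifs with h
  · rw [h, Nat.mod_self]
  · exact Nat.mod_eq_of_lt (by omega)

theorem ZMod.val_sub_eq_ite (a b : ZMod k) :
    (a - b).val = if b.val ≤ a.val then a.val - b.val else a.val + k - b.val := by
  split_ifs with h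
  · exact ZMod.val_sub h
  · have hb : b ≠ 0 := by rintro rfl; simp at h
    have := ZMod.val_lt b
    rw [sub_eq_add_neg, ZMod.val_add, ZMod.neg_val, if_neg hb, Nat.mod_eq_of_lt] <;> omega

@[simp]
theorem mem_cyc {i j x : ZMod k} :
    x ∈ cyc k i j ↔ 1 ≤ (x - i).val ∧ (x - i).val ≤ (j - i).val := by
  simp [cyc]

theorem ite_add_one_mem_cyc {R : Type*} [AddGroupWithOne R] (a b j : ZMod k) :
    (if j + 1 ∈ cyc k a b then (1 : R) else 0) =
      (if a.val ≤ j.val then 1 else 0) - (if b.val ≤ j.val then 1 else 0) +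
        (if b.val < a.val then 1 else 0) := by
  have := ZMod.val_lt a
  have := ZMod.val_lt b
  have := ZMod.val_lt j
  have hj := ZMod.val_add_one_eq_ite j
  have hja := ZMod.val_sub_eq_ite (j + 1) a
  have hba := ZMod.val_sub_eq_ite b a
  simp only [mem_cyc]
  split_ifs at hj hja hba ⊢ <;> first | omega | simp

end CyclicInterval

section Beta

variable {k : ℕ} [NeZero k]

theorem cyc_subset_iff_of_betaRel {T : Finset (ZMod k)} {i b : ZMod k} (hT : T ≠ univ)
    (hb : betaRel k T i b) (m : ZMod k) :
    cyc k i m ⊆ T ↔ (m - i).val ≤ (b - i).val := by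
  rw [betaRel, if_neg hT] at hb
  constructor
  · intro h
    by_contra! hlt
    have hm := ZMod.val_lt (m - i)
    have hb1 : (b + 1 - i).val = (b - i).val + 1 := by
      rw [add_sub_right_comm, ZMod.val_add_one_eq_ite, if_neg (by omega)]
    exact hb.1 (h (mem_cyc.2 ⟨by omega, by omega⟩))
  · intro h x hx
    exact hb.2 (mem_cyc.2 ⟨(mem_cyc.1 hx).1, (mem_cyc.1 hx).2.trans h⟩)

theorem betaRel_unique {T : Finset (ZMod k)} {i b b' : ZMod k} (hb : betaRel k T i b)
    (hb' : betaRel k T i b') : b = b' := by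
  by_cases hT : T = univ
  · rw [betaRel, if_pos hT] at hb hb'
    rw [hb, hb']
  have h := (cyc_subset_iff_of_betaRel hT hb b').1 (by rw [betaRel, if_neg hT] at hb'; exact hb'.2)
  have h' := (cyc_subset_iff_of_betaRel hT hb' b).1 (by rw [betaRel, if_neg hT] at hb; exact hb.2)
  simpa using ZMod.val_injective k (le_antisymm h' h)

theorem exists_betaRel (T : Finset (ZMod k)) (i : ZMod k) : ∃ b, betaRel k T i b := by
  classical
  by_cases hT : T = univ
  · exact ⟨i, by rw [betaRel, if_pos hT]⟩
  simp_rw [betaRel, if_neg hT]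
  obtain ⟨y, hy⟩ : ∃ y, y ∉ T := by simpa [Finset.eq_univ_iff_forall] using hT
  have hy' : i + ((y - i - 1).val : ℕ) + 1 ∉ T := by
    rwa [ZMod.natCast_zmod_val, show i + (y - i - 1) + 1 = y by ring]
  have hP : ∃ d : ℕ, i + d + 1 ∉ T := ⟨_, hy'⟩
  have hd : Nat.find hP < k := (Nat.find_min' hP hy').trans_lt (ZMod.val_lt _)
  refine ⟨i + Nat.find hP, Nat.find_spec hP, fun x hx => ?_⟩
  rw [mem_cyc, add_sub_cancel_left, ZMod.val_natCast_of_lt hd] at hx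
  have hx' := Nat.find_min hP (m := (x - i).val - 1) (by omega)
  rwa [not_not, Nat.cast_sub hx.1, ZMod.natCast_zmod_val, Nat.cast_one,
    show i + (x - i - 1) + 1 = x by ring] at hx'

noncomputable def beta (T : Finset (ZMod k)) (i : ZMod k) : ZMod k :=
  (exists_betaRel T i).choose

theorem betaRel_iff_eq_beta {T : Finset (ZMod k)} {i j : ZMod k} :
    betaRel k T i j ↔ j = beta T i :=
  ⟨fun h => betaRel_unique h (exists_betaRel T i).choose_spec,
    fun h => h ▸ (exists_betaRel T i).choose_spec⟩

end Beta

section FunctionalGraph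

open Matrix

theorem exists_iterate_eq_iff_of_ne {ι : Type*} {g : ι → ι} {ρ x : ι} (hx : x ≠ ρ) :
    (∃ n, g^[n] x = ρ) ↔ ∃ n, g^[n] (g x) = ρ := by
  refine ⟨fun ⟨n, hn⟩ => ?_, fun ⟨n, hn⟩ => ⟨n + 1, hn⟩⟩
  cases n with
  | zero => exact absurd hn hx
  | succ n => exact ⟨n, hn⟩

variable {ι R : Type*} [Fintype ι] [DecidableEq ι] [CommRing R] {M : Matrix ι ι R}

theorem Matrix.det_eq_one_of_unitriangular {α : Type*} [LinearOrder α] (b : ι → α)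
    (hdiag : ∀ i, M i i = 1) (hoff : ∀ i j, i ≠ j → b i ≤ b j → M i j = 0) :
    M.det = 1 := by
  have hM : M.BlockTriangular (fun i => OrderDual.toDual (b i)) :=
    fun i j hij => hoff i j (fun h => (h ▸ hij).false) hij.le
  rw [hM.det]
  refine Finset.prod_eq_one fun a _ => ?_
  have : M.toSquareBlock (fun i => OrderDual.toDual (b i)) a = 1 := by
    ext ⟨i, hi⟩ ⟨j, hj⟩
    rw [Matrix.toSquareBlock_def, Matrix.of_apply]
    by_cases hij : i = j
    · subst hij; simp [hdiag]
    · simp [hij, hoff i j hij (OrderDual.toDual_le_toDual.1 (hi.trans hj.symm).ge)]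
  rw [this, Matrix.det_one]

theorem Matrix.det_eq_zero_of_mulVec_eq_zero {v : ι → R} (hv : M *ᵥ v = 0) {x : ι}
    (hx : v x = 1) : M.det = 0 := by
  have : M.det • v = 0 := by
    rw [← Matrix.one_mulVec v, ← Matrix.smul_mulVec, ← Matrix.adjugate_mul,
      ← Matrix.mulVec_mulVec, hv, Matrix.mulVec_zero]
  simpa [hx] using congrFun this x

variable {g : ι → ι} {ρ : ι}

theorem det_eq_one_of_forall_exists_iterate_eq (hρ : ∀ j, M ρ j = if j = ρ then 1 else 0)
    (hM : ∀ i ≠ ρ, ∀ j ≠ ρ, M i j = (if j = i then 1 else 0) - (if j = g i then 1 else 0))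
    (hreach : ∀ x, ∃ n, g^[n] x = ρ) : M.det = 1 := by
  classical
  set h : ι → ℕ := fun x => Nat.find (hreach x)
  have hρ0 : h ρ = 0 := (Nat.find_eq_zero _).2 rfl
  have hpos {x} (hx : x ≠ ρ) : 0 < h x :=
    Nat.pos_of_ne_zero fun h0 => hx (by simpa [h, h0] using Nat.find_spec (hreach x))
  have hstep {x} (hx : x ≠ ρ) : h (g x) < h x := by
    have hgx : g^[h x - 1] (g x) = ρ := by
      rw [← Function.iterate_succ_apply, Nat.succ_eq_add_one, Nat.sub_add_cancel (hpos hx)]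
      exact Nat.find_spec (hreach x)
    have : h (g x) ≤ h x - 1 := Nat.find_min' _ hgx
    have := hpos hx
    omega
  refine Matrix.det_eq_one_of_unitriangular h (fun i => ?_) (fun i j hij hle => ?_)
  · by_cases hi : i = ρ
    · simp [hi, hρ]
    · have : i ≠ g i := fun hg => (hstep hi).ne (congrArg h hg.symm)
      simp [hM i hi i hi, this]
  · by_cases hi : i = ρ
    · subst hi
      rw [hρ, if_neg hij.symm]
    · have hj : j ≠ ρ := by rintro rfl; exact (hpos hi).not_ge (hρ0 ▸ hle)
      have hgj : j ≠ g i := by rintro rfl; exact (hstep hi).not_ge hle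
      rw [hM i hi j hj, if_neg hij.symm, if_neg hgj, sub_zero]

theorem det_eq_zero_of_not_exists_iterate_eq (hρ : ∀ j, M ρ j = if j = ρ then 1 else 0)
    (hM : ∀ i ≠ ρ, ∀ j ≠ ρ, M i j = (if j = i then 1 else 0) - (if j = g i then 1 else 0))
    {x₀ : ι} (hx₀ : ¬ ∃ n, g^[n] x₀ = ρ) : M.det = 0 := by
  classical
  set v : ι → R := fun x => if ∃ n, g^[n] x = ρ then 0 else 1
  have hvρ : v ρ = 0 := if_pos ⟨0, rfl⟩
  refine Matrix.det_eq_zero_of_mulVec_eq_zero (v := v) (funext fun i => ?_) (if_neg hx₀)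
  simp only [Matrix.mulVec, dotProduct, Pi.zero_apply]
  by_cases hi : i = ρ
  · simp [hi, hρ, hvρ]
  · have : ∀ j, M i j * v j = ((if j = i then 1 else 0) - (if j = g i then 1 else 0)) * v j := by
      intro j
      by_cases hj : j = ρ
      · rw [hj, hvρ, mul_zero, mul_zero]
      · rw [hM i hi j hj]
    simp only [this, sub_mul, Finset.sum_sub_distrib, ite_mul, one_mul, zero_mul,
      Finset.sum_ite_eq', Finset.mem_univ, if_true, v, exists_iterate_eq_iff_of_ne hi, sub_self]

end FunctionalGraph

section EventMatrix

open Classical in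
noncomputable def eventMatrix {Om ι : Type*} (E : ι → ι → Set Om) (om : Om) :
    Matrix ι ι ℚ :=
  Matrix.of fun i j => if om ∈ E i j then 1 else 0

theorem natCard_subtype_eq_sum_ite {Om : Type*} [Fintype Om] (P : Om → Prop) [DecidablePred P] :
    (Nat.card {om // P om} : ℚ) = ∑ om, if P om then 1 else 0 := by
  rw [Finset.sum_boole, Nat.card_eq_fintype_card, Fintype.card_subtype]

theorem Pdet_eq_sum_det_eventMatrix {k : ℕ} [NeZero k] {Om : Type} [Fintype Om]
    (E : ZMod k → ZMod k → Set Om) :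
    Pdet E = (∑ om, (eventMatrix E om).det) / Nat.card Om := by
  classical
  have hcard (π : Equiv.Perm (ZMod k)) :
      (Nat.card (⋂ i, E i (π i)) : ℚ) = ∑ om, ∏ i, eventMatrix E om i (π i) := by
    simp only [eventMatrix, Matrix.of_apply, Fintype.prod_boole, ← Set.mem_iInter]
    convert natCard_subtype_eq_sum_ite (· ∈ ⋂ i, E i (π i))
  simp only [Pdet, PrU, mul_div_assoc', ← Finset.sum_div, hcard, Finset.mul_sum]
  rw [Finset.sum_comm]
  congr 1
  refine Finset.sum_congr rfl fun om _ => ?_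
  rw [← Matrix.det_transpose, Matrix.det_apply']
  simp [Matrix.transpose_apply]

end EventMatrix

section BetaMatrix

variable {k r : ℕ} [NeZero k] {p : ZMod k → ℕ}

noncomputable def betaMap (S : Fin r → Finset (ZMod k)) (f : {i : ZMod k // i ≠ 0} → Fin r)
    (x : ZMod k) : ZMod k :=
  if hx : x = 0 then 0 else beta (S (f ⟨x, hx⟩)) x

theorem GIsTree_betaRel_iff (S : Fin r → Finset (ZMod k))
    (f : {i : ZMod k // i ≠ 0} → Fin r) :
    GIsTree k r (betaRel k) S f ↔ ∀ x, ∃ n, (betaMap S f)^[n] x = 0 := by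
  refine ⟨fun ⟨g, hg0, hrel, hreach⟩ => ?_,
    fun h => ⟨betaMap S f, dif_pos rfl, fun i => ?_, h⟩⟩
  · suffices betaMap S f = g by rwa [this]
    funext x
    by_cases hx : x = 0
    · rw [hx, hg0, betaMap, dif_pos rfl]
    · rw [betaMap, dif_neg hx]
      exact (betaRel_iff_eq_beta.1 (hrel ⟨x, hx⟩)).symm
  · rw [betaMap, dif_neg i.2, betaRel_iff_eq_beta]

theorem mem_Mbeta_zero (om : OmS k r p) (j : ZMod k) : om ∈ Mbeta k r p 0 j :=
  fun h => absurd rfl h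

theorem mem_Mbeta_iff_add_one_mem_cyc (om : OmS k r p) {i : ZMod k} (hi : i ≠ 0)
    (hT : om.1.1 (om.1.2 ⟨i, hi⟩) ≠ univ) (j : ZMod k) :
    om ∈ Mbeta k r p i j ↔ j + 1 ∈ cyc k i (beta (om.1.1 (om.1.2 ⟨i, hi⟩)) i) := by
  simp only [Mbeta, Set.mem_ofPred_eq, forall_prop_of_true hi]
  split_ifs with hij
  · simp [hT, ← hij]
  · rw [cyc_subset_iff_of_betaRel hT (betaRel_iff_eq_beta.2 rfl), mem_cyc, iff_and_self]
    exact fun _ => Nat.one_le_iff_ne_zero.2 fun h =>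
      hij (sub_eq_zero.1 ((ZMod.val_eq_zero _).1 h)).symm

noncomputable def valLE : Matrix (ZMod k) (ZMod k) ℚ :=
  Matrix.of fun a b => if a.val ≤ b.val then 1 else 0

theorem det_valLE : (valLE : Matrix (ZMod k) (ZMod k) ℚ).det = 1 :=
  Matrix.det_eq_one_of_unitriangular (fun a => OrderDual.toDual a.val) (fun _ => if_pos le_rfl)
    fun _ _ hab hle => if_neg fun h => hab (ZMod.val_injective k (le_antisymm h hle))

theorem eventMatrix_Mbeta_eq_mul (om : OmS k r p) (hU : ∀ i, om.1.1 (om.1.2 i) ≠ univ) :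
    eventMatrix (Mbeta k r p) om =
      Matrix.of (fun i j => if i = 0 then (if j = 0 then 1 else 0) else
        (if j = i then 1 else 0) - (if j = betaMap om.1.1 om.1.2 i then 1 else 0) +
          (if j = 0 ∧ (betaMap om.1.1 om.1.2 i).val < i.val then 1 else 0)) * valLE := by
  ext i j
  simp only [Matrix.mul_apply, Matrix.of_apply, ite_mul, one_mul, zero_mul, add_mul, sub_mul,
    Finset.sum_add_distrib, Finset.sum_sub_distrib, Finset.sum_ite_eq', Finset.mem_univ, if_true,
    eventMatrix, valLE, ite_and, Finset.sum_ite_irrel]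
  by_cases hi : i = 0
  · simp [hi, mem_Mbeta_zero]
  · simp only [if_neg hi, mem_Mbeta_iff_add_one_mem_cyc om hi (hU _) j, ite_add_one_mem_cyc,
      betaMap, dif_neg hi, ZMod.val_zero, zero_le, if_true]

open Classical in
theorem det_eventMatrix_Mbeta (om : OmS k r p) :
    (eventMatrix (Mbeta k r p) om).det =
      if GIsTree k r (betaRel k) om.1.1 om.1.2 then 1 else 0 := by
  rw [GIsTree_betaRel_iff]
  by_cases hU : ∃ i, om.1.1 (om.1.2 i) = univ
  · obtain ⟨i, hi⟩ := hU
    have hfix : betaMap om.1.1 om.1.2 i = i := by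
      rw [betaMap, dif_neg i.2, hi, eq_comm, ← betaRel_iff_eq_beta, betaRel, if_pos rfl]
    have hrow : ∀ j, om ∈ Mbeta k r p i j := fun j _ => by
      split_ifs
      · exact hi
      · exact hi ▸ Finset.subset_univ _
    rw [if_neg fun h => ?_]
    · refine Matrix.det_zero_of_row_eq i.2 (funext fun j => ?_)
      simp [eventMatrix, hrow, mem_Mbeta_zero]
    · obtain ⟨n, hn⟩ := h i
      exact i.2 (by rwa [Function.iterate_fixed hfix] at hn)
  · rw [eventMatrix_Mbeta_eq_mul om (not_exists.1 hU), Matrix.det_mul, det_valLE, mul_one]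
    split_ifs with h
    · exact det_eq_one_of_forall_exists_iterate_eq (by simp) (by simp +contextual) h
    · obtain ⟨x, hx⟩ := not_forall.1 h
      exact det_eq_zero_of_not_exists_iterate_eq (by simp) (by simp +contextual) hx

end BetaMatrix

theorem prob_tree_beta_eq_Pdet_general (k r : ℕ) [NeZero k]
    (p : ZMod k → ℕ) :
    (Nat.card {om : OmS k r p // GIsTree k r (betaRel k) om.1.1 om.1.2} : ℚ) /
      (Nat.card (OmS k r p) : ℚ) = Pdet (Mbeta k r p) := by
  classical
  have := Fintype.ofFinite (OmS k r p)
  rw [Pdet_eq_sum_det_eventMatrix, natCard_subtype_eq_sum_ite]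
  simp_rw [det_eventMatrix_Mbeta]

/-- For `(S,f)` uniform on `Ω` (pairs of a tuple in `𝒮_{p,r}` and a surjection
`[k-1] → [r]`), the probability that `G_β(S,f)` is a tree equals `Pdet(M_β)`. -/
theorem prob_tree_beta_eq_Pdet (k r : ℕ) [NeZero k] (hr : 0 < r) (hrk : r < k)
    (p : ZMod k → ℕ)
    (hS : Nonempty {S : Fin r → Finset (ZMod k) // SprMem k r p S}) :
    (Nat.card {om : OmS k r p // GIsTree k r (betaRel k) om.1.1 om.1.2} : ℚ) /
      (Nat.card (OmS k r p) : ℚ) = Pdet (Mbeta k r p) :=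
  prob_tree_beta_eq_Pdet_general k r p
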